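/- Let G₂(x,t) = x⁴ + 6(t² + 1)x² + 5t⁴ + 18t² − 3, H₂(x,t) = x⁴ + 2(t² − 3)x² + (t² + 5)(t² − 3), and D₂(x,t) = x⁶ + 3(t² + 1)x⁴ + 3(t² − 3)²x² + t⁶ + 27t⁴ + 99t² + 9, and let ψ₂(x,t) = (1 − 12·(G₂(x,t) + i·t·H₂(x,t))/D₂(x,t))·exp(it/2). Then D₂(x,t) > 0 for all real x, t, and the squared modulus satisfies the identity |ψ₂(x,t)|² = 1 + 4·∂²/∂x² [ln D₂(x,t)] for all (x,t) ∈ ℝ². -/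

import Mathlib

/-!
Since `exp (i t / 2)` has modulus one, `|ψ₂|² D₂² = (D₂ − 12 G₂)² + (12 t H₂)²`, while
`∂ₓ² ln D₂ = (D₂ ∂ₓ²D₂ − (∂ₓD₂)²) / D₂²`. The claim is therefore equivalent to the Hirota bilinear
identity `(D₂ − 12 G₂)² + (12 t H₂)² = D₂² + 4 (D₂ ∂ₓ²D₂ − (∂ₓD₂)²)` between polynomials in `x, t`,
which is checked by expansion.
-/

/-- Partial derivative in the first (space) variable. -/
noncomputable def dX (f : ℝ → ℝ → ℝ) : ℝ → ℝ → ℝ := fun x t => deriv (fun x' => f x' t) x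

/-- `G₂(x,t) = x⁴ + 6(t²+1)x² + 5t⁴ + 18t² − 3`. -/
noncomputable def G2 (x t : ℝ) : ℝ :=
  x ^ 4 + 6 * (t ^ 2 + 1) * x ^ 2 + 5 * t ^ 4 + 18 * t ^ 2 - 3

/-- `H₂(x,t) = x⁴ + 2(t²−3)x² + (t²+5)(t²−3)`. -/
noncomputable def H2 (x t : ℝ) : ℝ :=
  x ^ 4 + 2 * (t ^ 2 - 3) * x ^ 2 + (t ^ 2 + 5) * (t ^ 2 - 3)

/-- `D₂(x,t) = x⁶ + 3(t²+1)x⁴ + 3(t²−3)²x² + t⁶ + 27t⁴ + 99t² + 9`. -/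
noncomputable def D2 (x t : ℝ) : ℝ :=
  x ^ 6 + 3 * (t ^ 2 + 1) * x ^ 4 + 3 * (t ^ 2 - 3) ^ 2 * x ^ 2
    + t ^ 6 + 27 * t ^ 4 + 99 * t ^ 2 + 9

/-- The second rational solution `ψ₂` of the focusing NLS equation. -/
noncomputable def psi2 (x t : ℝ) : ℂ :=
  (1 - 12 * (((G2 x t : ℝ) : ℂ) + Complex.I * (t : ℂ) * ((H2 x t : ℝ) : ℂ))
      / ((D2 x t : ℝ) : ℂ)) * Complex.exp (Complex.I * (t : ℂ) / 2)

noncomputable def D2dx (x t : ℝ) : ℝ :=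
  6 * x ^ 5 + 12 * (t ^ 2 + 1) * x ^ 3 + 6 * (t ^ 2 - 3) ^ 2 * x

noncomputable def D2dxx (x t : ℝ) : ℝ :=
  30 * x ^ 4 + 36 * (t ^ 2 + 1) * x ^ 2 + 6 * (t ^ 2 - 3) ^ 2

theorem deriv_deriv_log_eq {f f' : ℝ → ℝ} {f'' x : ℝ} (hf : ∀ y, HasDerivAt f (f' y) y)
    (hf0 : ∀ y, f y ≠ 0) (hf' : HasDerivAt f' f'' x) :
    deriv (deriv fun y => Real.log (f y)) x = (f'' * f x - f' x ^ 2) / f x ^ 2 := by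
  have hlog : deriv (fun y => Real.log (f y)) = fun y => f' y / f y :=
    funext fun y => ((hf y).log (hf0 y)).deriv
  rw [hlog]
  exact (hf'.div (hf x) (hf0 x)).deriv.trans (by ring)

theorem norm_mul_exp_I_mul_ofReal_div_two (z : ℂ) (t : ℝ) :
    ‖z * Complex.exp (Complex.I * t / 2)‖ = ‖z‖ := by
  rw [norm_mul, Complex.norm_exp]
  simp

theorem D2_pos (x t : ℝ) : 0 < D2 x t := by
  unfold D2; positivity

theorem hasDerivAt_D2 (x t : ℝ) : HasDerivAt (fun y => D2 y t) (D2dx x t) x := by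
  have h := (((hasDerivAt_pow 6 x).add ((hasDerivAt_pow 4 x).const_mul (3 * (t ^ 2 + 1)))).add
    ((hasDerivAt_pow 2 x).const_mul (3 * (t ^ 2 - 3) ^ 2))).add_const
    (t ^ 6 + 27 * t ^ 4 + 99 * t ^ 2 + 9)
  refine (h.congr_deriv (by norm_num [D2dx]; ring)).congr_of_eventuallyEq (.of_forall fun y => ?_)
  simp only [D2, Pi.add_apply]; ring

theorem hasDerivAt_D2dx (x t : ℝ) : HasDerivAt (fun y => D2dx y t) (D2dxx x t) x := by
  have h := (((hasDerivAt_pow 5 x).const_mul 6).add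
    ((hasDerivAt_pow 3 x).const_mul (12 * (t ^ 2 + 1)))).add
    ((hasDerivAt_id x).const_mul (6 * (t ^ 2 - 3) ^ 2))
  exact h.congr_deriv (by norm_num [D2dxx]; ring)

theorem dX_dX_log_D2 (x t : ℝ) :
    dX (dX fun x' t' => Real.log (D2 x' t')) x t
      = (D2dxx x t * D2 x t - D2dx x t ^ 2) / D2 x t ^ 2 :=
  deriv_deriv_log_eq (fun y => hasDerivAt_D2 y t) (fun y => (D2_pos y t).ne')
    (hasDerivAt_D2dx x t)

theorem norm_psi2_sq (x t : ℝ) :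
    ‖psi2 x t‖ ^ 2 = ((D2 x t - 12 * G2 x t) ^ 2 + (12 * t * H2 x t) ^ 2) / D2 x t ^ 2 := by
  have hD : (D2 x t : ℂ) ≠ 0 := by exact_mod_cast (D2_pos x t).ne'
  have hpsi : psi2 x t = (((D2 x t - 12 * G2 x t) / D2 x t : ℝ)
      + ((-(12 * t * H2 x t) / D2 x t : ℝ)) * Complex.I) * Complex.exp (Complex.I * t / 2) := by
    unfold psi2
    push_cast
    field_simp
    ring
  rw [hpsi, norm_mul_exp_I_mul_ofReal_div_two, Complex.sq_norm, Complex.normSq_add_mul_I]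
  field_simp

theorem D2_hirota_bilinear_identity (x t : ℝ) :
    (D2 x t - 12 * G2 x t) ^ 2 + (12 * t * H2 x t) ^ 2
      = D2 x t ^ 2 + 4 * (D2dxx x t * D2 x t - D2dx x t ^ 2) := by
  unfold D2 G2 H2 D2dx D2dxx
  ring

theorem psi2_modulus_identity :
    (∀ x t : ℝ, 0 < D2 x t) ∧
    (∀ x t : ℝ,
      (‖psi2 x t‖) ^ 2
        = 1 + 4 * dX (dX (fun x' t' => Real.log (D2 x' t'))) x t) := by
  refine ⟨D2_pos, fun x t => ?_⟩
  have hD : D2 x t ^ 2 ≠ 0 := pow_ne_zero 2 (D2_pos x t).ne'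
  rw [norm_psi2_sq, dX_dX_log_D2, D2_hirota_bilinear_identity, add_div, div_self hD, mul_div_assoc]
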